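/- For every m ∈ ℕ, nested words u₁, u₂, v₁, v₂ over Σ, and positions e₁ of u₁ and e₂ of u₂: if (u₁, e₁) ≡_m (u₂, e₂) (quantifier rank m equivalence of the structures expanded with a constant for the distinguished position) and v₁ ≡_m v₂, then u₁↑_{e₁}v₁ ≡_m u₂↑_{e₂}v₂. -/

import Mathlib

/-!
On finite structures, `≡_m` between tuples coincides with Duplicator winning the `m`-round
Ehrenfeucht–Fraïssé game started from these tuples. Duplicator wins on the inserts by running
her winning strategies on the `u`-parts, with `e` as a pebble placed from the start, and on the
`v`-parts independently, answering every move in the component it was made in. This works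
because the atomic type of a tuple in `u ↑_e v` is determined by the atomic types of its
`u`-part together with `e` and of its `v`-part: a `u`-position lies below a `v`-position iff it
lies below or at `e`.
-/

open FirstOrder Language

/-- Quantifier rank of a first-order (bounded) formula. -/
def FirstOrder.Language.BoundedFormula.qr {L : FirstOrder.Language} {α : Type*} :
    ∀ {n : ℕ}, L.BoundedFormula α n → ℕ
  | _, .falsum => 0
  | _, .equal _ _ => 0
  | _, .rel _ _ => 0
  | _, .imp f g => max f.qr g.qr
  | _, .all f => f.qr + 1

/-- Elementary equivalence up to quantifier rank `m` (for sentences). -/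
def eqQR (L : FirstOrder.Language) (m : ℕ) (M N : Type)
    (SM : L.Structure M) (SN : L.Structure N) : Prop :=
  ∀ φ : L.Sentence, φ.qr ≤ m →
    ((letI := SM; M ⊨ φ) ↔ (letI := SN; N ⊨ φ))

/-- Elementary equivalence up to quantifier rank `m` of structures expanded with
a constant for a distinguished element: agreement on all formulas in one free
variable of quantifier rank at most `m`, evaluated at the distinguished elements. -/
def eqQR1 (L : FirstOrder.Language) (m : ℕ) (M N : Type)
    (SM : L.Structure M) (SN : L.Structure N) (e : M) (e' : N) : Prop :=
  ∀ φ : L.Formula (Fin 1), φ.qr ≤ m →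
    ((letI := SM; φ.Realize (fun _ => e)) ↔ (letI := SN; φ.Realize (fun _ => e')))

/-- A nested word over alphabet `Alpha` with set of positions `Pos`. -/
structure NestedWordOn (Alpha Pos : Type) where
  le : Pos → Pos → Prop
  linear : IsLinearOrder Pos le
  label : Pos → Alpha
  mt : Pos → Pos → Prop
  mt_le : ∀ {i j}, mt i j → le i j ∧ i ≠ j
  mt_right_unique : ∀ {i j k}, mt i j → mt i k → j = k
  mt_left_unique : ∀ {j k i}, mt j i → mt k i → j = k
  mt_noncross : ∀ {i₁ i₂ j₁ j₂}, mt i₁ j₁ → mt i₂ j₂ →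
    ¬((le i₁ i₂ ∧ i₁ ≠ i₂) ∧ le i₂ j₁ ∧ (le j₁ j₂ ∧ j₁ ≠ j₂))

/-- The two binary relation symbols of the signature of nested words. -/
inductive NWRel2 : Type
  | le
  | mt

/-- The signature of nested words over `Alpha`. -/
def nwLang (Alpha : Type) : FirstOrder.Language :=
  ⟨fun _ => Empty, fun n => match n with
    | 1 => Alpha
    | 2 => NWRel2
    | _ => Empty⟩

/-- A nested word as a first-order structure over `nwLang Alpha`. -/
def nwStructure {Alpha P : Type} (nw : NestedWordOn Alpha P) :
    (nwLang Alpha).Structure P where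
  funMap := fun {_} f => Empty.elim f
  RelMap := fun {n} => match n with
    | 0 => fun r => Empty.elim r
    | 1 => fun (a : Alpha) x => nw.label (x 0) = a
    | 2 => fun r x => match r with
      | NWRel2.le => nw.le (x 0) (x 1)
      | NWRel2.mt => nw.mt (x 0) (x 1)
    | (_ + 3) => fun r => Empty.elim r

/-- The order relation of the insert `w ↑_e v`. -/
def insLE {W V : Type} (lew : W → W → Prop) (lev : V → V → Prop) (e : W) :
    W ⊕ V → W ⊕ V → Prop
  | .inl i, .inl j => lew i j
  | .inr i, .inr j => lev i j
  | .inl i, .inr _ => lew i e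
  | .inr _, .inl i => lew e i ∧ e ≠ i

/-- The matching relation of the insert `w ↑_e v`. -/
def insMT {W V : Type} (mtw : W → W → Prop) (mtv : V → V → Prop) :
    W ⊕ V → W ⊕ V → Prop
  | .inl i, .inl j => mtw i j
  | .inr i, .inr j => mtv i j
  | _, _ => False

/-- The insert `u ↑_e v` of nested words as a first-order structure. -/
def insStructure {Alpha U V : Type}
    (u : NestedWordOn Alpha U) (v : NestedWordOn Alpha V) (e : U) :
    (nwLang Alpha).Structure (U ⊕ V) where
  funMap := fun {_} f => Empty.elim f
  RelMap := fun {n} => match n with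
    | 0 => fun r => Empty.elim r
    | 1 => fun (a : Alpha) x => Sum.elim u.label v.label (x 0) = a
    | 2 => fun r x => match r with
      | NWRel2.le => insLE u.le v.le e (x 0) (x 1)
      | NWRel2.mt => insMT u.mt v.mt (x 0) (x 1)
    | (_ + 3) => fun r => Empty.elim r

namespace FirstOrder.Language.BoundedFormula

variable {L : Language} {α β : Type*} {n : ℕ}

@[simp]
theorem qr_not (φ : L.BoundedFormula α n) : φ.not.qr = φ.qr :=
  max_eq_left (Nat.zero_le _)

@[simp]
theorem qr_inf (φ ψ : L.BoundedFormula α n) : (φ ⊓ ψ).qr = max φ.qr ψ.qr :=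
  (qr_not _).trans (congrArg (max φ.qr) (qr_not ψ))

@[simp]
theorem qr_ex (φ : L.BoundedFormula α (n + 1)) : φ.ex.qr = φ.qr + 1 :=
  (qr_not _).trans (congrArg (· + 1) (qr_not φ))

theorem qr_iInf_le [Finite β] (f : β → L.BoundedFormula α n) {m : ℕ} (h : ∀ b, (f b).qr ≤ m) :
    (iInf f).qr ≤ m := by
  suffices ∀ l : List (L.BoundedFormula α n), (∀ φ ∈ l, φ.qr ≤ m) →
      (l.foldr (· ⊓ ·) ⊤).qr ≤ m from
    this _ (by simpa using h)
  intro l hl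
  induction l with
  | nil => exact Nat.zero_le m
  | cons φ l ih =>
    simp only [List.forall_mem_cons] at hl
    simpa [hl.1] using ih hl.2

@[simp]
theorem qr_castLE {k n : ℕ} (h : k ≤ n) (φ : L.BoundedFormula α k) : (φ.castLE h).qr = φ.qr := by
  induction φ generalizing n with
  | falsum | equal | rel => rfl
  | imp f g ihf ihg => exact congrArg₂ max (ihf h) (ihg h)
  | all f ih => exact congrArg (· + 1) (ih _)

theorem qr_mapTermRel {L' : Language} {g : ℕ → ℕ}
    (ft : ∀ n, L.Term (α ⊕ Fin n) → L'.Term (β ⊕ Fin (g n)))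
    (fr : ∀ n, L.Relations n → L'.Relations n)
    (h : ∀ n, L'.BoundedFormula β (g (n + 1)) → L'.BoundedFormula β (g n + 1))
    (hh : ∀ n ψ, (h n ψ).qr = ψ.qr) (φ : L.BoundedFormula α n) :
    (φ.mapTermRel ft fr h).qr = φ.qr := by
  induction φ with
  | falsum | equal | rel => rfl
  | imp f g ihf ihg => exact congrArg₂ max ihf ihg
  | all f ih => exact congrArg (· + 1) ((hh _ _).trans ih)

@[simp]
theorem qr_relabel (g : α → β ⊕ Fin n) {k : ℕ} (φ : L.BoundedFormula α k) :
    (φ.relabel g).qr = φ.qr :=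
  qr_mapTermRel _ _ _ (fun _ _ => qr_castLE _ _) φ

@[simp]
theorem qr_toFormula (φ : L.BoundedFormula α n) : φ.toFormula.qr = φ.qr := by
  induction φ with
  | falsum | equal | rel => rfl
  | imp f g ihf ihg => exact congrArg₂ max ihf ihg
  | all f ih => exact congrArg (· + 1) ((qr_relabel _ _).trans ih)

end FirstOrder.Language.BoundedFormula

namespace FirstOrder.Language

open Structure

variable {L : Language} {M N : Type*}

theorem Term.exists_eq_var_inr [L.IsRelational] {k : ℕ} (t : L.Term (Empty ⊕ Fin k)) :
    ∃ i, t = var (Sum.inr i) := by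
  rcases t with (e | i) | ⟨f, _⟩
  · exact e.elim
  · exact ⟨i, rfl⟩
  · exact isEmptyElim f

def AtomicEquiv (SM : L.Structure M) (SN : L.Structure N) {k : ℕ}
    (as : Fin k → M) (bs : Fin k → N) : Prop :=
  (∀ i j, as i = as j ↔ bs i = bs j) ∧
  ∀ {n} (R : L.Relations n) (v : Fin n → Fin k),
    (letI := SM; RelMap R (as ∘ v)) ↔ (letI := SN; RelMap R (bs ∘ v))

def QREquiv (SM : L.Structure M) (SN : L.Structure N) (m : ℕ) {k : ℕ}
    (as : Fin k → M) (bs : Fin k → N) : Prop :=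
  ∀ φ : L.BoundedFormula Empty k, φ.qr ≤ m →
    ((letI := SM; φ.Realize default as) ↔ (letI := SN; φ.Realize default bs))

def DuplicatorWins (SM : L.Structure M) (SN : L.Structure N) :
    ℕ → {k : ℕ} → (Fin k → M) → (Fin k → N) → Prop
  | 0, _, as, bs => AtomicEquiv SM SN as bs
  | m + 1, _, as, bs => AtomicEquiv SM SN as bs ∧
      (∀ a, ∃ b, DuplicatorWins SM SN m (Fin.snoc as a) (Fin.snoc bs b)) ∧
      (∀ b, ∃ a, DuplicatorWins SM SN m (Fin.snoc as a) (Fin.snoc bs b))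

variable {SM : L.Structure M} {SN : L.Structure N} {m k : ℕ} {as : Fin k → M} {bs : Fin k → N}

namespace DuplicatorWins

theorem atomicEquiv (h : DuplicatorWins SM SN m as bs) : AtomicEquiv SM SN as bs := by
  cases m with
  | zero => exact h
  | succ m => exact h.1

theorem of_succ (h : DuplicatorWins SM SN (m + 1) as bs) : DuplicatorWins SM SN m as bs := by
  induction m generalizing k with
  | zero => exact h.1
  | succ m ih =>
    exact ⟨h.1, fun a => (h.2.1 a).imp fun _ => ih, fun b => (h.2.2 b).imp fun _ => ih⟩

theorem qrEquiv [L.IsRelational] (h : DuplicatorWins SM SN m as bs) : QREquiv SM SN m as bs := by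
  intro φ hφ
  induction φ generalizing m with
  | falsum => exact Iff.rfl
  | equal t₁ t₂ =>
    obtain ⟨i, rfl⟩ := t₁.exists_eq_var_inr
    obtain ⟨j, rfl⟩ := t₂.exists_eq_var_inr
    exact h.atomicEquiv.1 i j
  | rel R ts =>
    choose v hv using fun i => (ts i).exists_eq_var_inr
    obtain rfl : ts = fun i => Term.var (Sum.inr (v i)) := funext hv
    exact h.atomicEquiv.2 R v
  | imp f g ihf ihg =>
    have hm : max f.qr g.qr ≤ m := hφ
    exact imp_congr (ihf h (le_of_max_le_left hm)) (ihg h (le_of_max_le_right hm))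
  | all f ih =>
    obtain _ | m := m
    · exact absurd hφ (Nat.not_succ_le_zero _)
    have hm : f.qr ≤ m := Nat.le_of_succ_le_succ hφ
    refine ⟨fun hM b => ?_, fun hN a => ?_⟩
    · obtain ⟨a, ha⟩ := h.2.2 b
      exact (ih ha hm).1 (hM a)
    · obtain ⟨b, hb⟩ := h.2.1 a
      exact (ih hb hm).2 (hN b)

end DuplicatorWins

namespace QREquiv

theorem symm (h : QREquiv SM SN m as bs) : QREquiv SN SM m bs as :=
  fun φ hφ => (h φ hφ).symm

theorem atomicEquiv (h : QREquiv SM SN m as bs) : AtomicEquiv SM SN as bs :=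
  ⟨fun i j => h (.equal (.var (.inr i)) (.var (.inr j))) (Nat.zero_le m),
    fun R v => h (.rel R fun i => .var (.inr (v i))) (Nat.zero_le m)⟩

/-- In place of a Hintikka formula, `∃ x, ⋀_b φ_b` is used, where `φ_b` of rank `m` separates
`snoc as a` from `snoc bs b`: this is where finiteness of `N` enters. -/
theorem exists_snoc [Finite N] (h : QREquiv SM SN (m + 1) as bs) (a : M) :
    ∃ b, QREquiv SM SN m (Fin.snoc as a) (Fin.snoc bs b) := by
  by_contra! hne
  have separating : ∀ b, ∃ φ : L.BoundedFormula Empty (k + 1), φ.qr ≤ m ∧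
      (letI := SM; φ.Realize default (Fin.snoc as a)) ∧
      ¬(letI := SN; φ.Realize default (Fin.snoc bs b)) := by
    intro b
    obtain ⟨φ, hφ, hdiff⟩ : ∃ φ : L.BoundedFormula Empty (k + 1), φ.qr ≤ m ∧ ¬_ := by
      simpa [QREquiv] using hne b
    by_cases hM : (letI := SM; φ.Realize default (Fin.snoc as a))
    · exact ⟨φ, hφ, hM, fun hN => hdiff (iff_of_true hM hN)⟩
    · exact ⟨φ.not, by simpa using hφ, hM, fun hN => hdiff (iff_of_false hM hN)⟩
  choose φ hφ using separating
  have hex : (letI := SN; (BoundedFormula.iInf φ).ex.Realize default bs) :=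
    (h _ (by simpa using BoundedFormula.qr_iInf_le φ fun b => (hφ b).1)).1 <|
      BoundedFormula.realize_ex.2 ⟨a, BoundedFormula.realize_iInf.2 fun b => (hφ b).2.1⟩
  obtain ⟨b, hb⟩ := BoundedFormula.realize_ex.1 hex
  exact (hφ b).2.2 (BoundedFormula.realize_iInf.1 hb b)

theorem duplicatorWins [Finite M] [Finite N] (h : QREquiv SM SN m as bs) :
    DuplicatorWins SM SN m as bs := by
  induction m generalizing k with
  | zero => exact h.atomicEquiv
  | succ m ih =>
    exact ⟨h.atomicEquiv, fun a => (h.exists_snoc a).imp fun _ => ih,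
      fun b => (h.symm.exists_snoc b).imp fun _ hb => ih hb.symm⟩

end QREquiv

end FirstOrder.Language

theorem Fin.sumMap_snoc_comp_snoc_inl {W X : Type*} {ku kv k : ℕ} (f : Fin ku → W) (g : Fin kv → X)
    (σ : Fin k → Fin ku ⊕ Fin kv) (x : W) :
    Sum.map (Fin.snoc f x) g ∘ Fin.snoc (Sum.map Fin.castSucc id ∘ σ) (.inl (Fin.last ku)) =
      Fin.snoc (Sum.map f g ∘ σ) (.inl x) := by
  funext i
  refine Fin.lastCases (by simp) (fun j => ?_) i
  rcases h : σ j with t | t <;> simp [h]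

theorem Fin.sumMap_snoc_comp_snoc_inr {W X : Type*} {ku kv k : ℕ} (f : Fin ku → W) (g : Fin kv → X)
    (σ : Fin k → Fin ku ⊕ Fin kv) (x : X) :
    Sum.map f (Fin.snoc g x) ∘ Fin.snoc (Sum.map id Fin.castSucc ∘ σ) (.inr (Fin.last kv)) =
      Fin.snoc (Sum.map f g ∘ σ) (.inr x) := by
  funext i
  refine Fin.lastCases (by simp) (fun j => ?_) i
  rcases h : σ j with t | t <;> simp [h]

section

variable {W₁ W₂ X₁ X₂ : Type} {ku kv : ℕ} {as₁ : Fin ku → W₁} {as₂ : Fin ku → W₂}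
  {bs₁ : Fin kv → X₁} {bs₂ : Fin kv → X₂}

theorem sumMap_eq_sumMap_iff (heq : ∀ i j, as₁ i = as₁ j ↔ as₂ i = as₂ j)
    (heq' : ∀ i j, bs₁ i = bs₁ j ↔ bs₂ i = bs₂ j) (x y : Fin ku ⊕ Fin kv) :
    Sum.map as₁ bs₁ x = Sum.map as₁ bs₁ y ↔ Sum.map as₂ bs₂ x = Sum.map as₂ bs₂ y := by
  rcases x with x | x <;> rcases y with y | y <;> simp [heq, heq']

theorem insLE_sumMap_iff {le₁ : W₁ → W₁ → Prop} {le₂ : W₂ → W₂ → Prop}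
    {le₁' : X₁ → X₁ → Prop} {le₂' : X₂ → X₂ → Prop} (i₀ : Fin ku)
    (heq : ∀ i j, as₁ i = as₁ j ↔ as₂ i = as₂ j)
    (hle : ∀ i j, le₁ (as₁ i) (as₁ j) ↔ le₂ (as₂ i) (as₂ j))
    (hle' : ∀ i j, le₁' (bs₁ i) (bs₁ j) ↔ le₂' (bs₂ i) (bs₂ j)) (x y : Fin ku ⊕ Fin kv) :
    insLE le₁ le₁' (as₁ i₀) (Sum.map as₁ bs₁ x) (Sum.map as₁ bs₁ y) ↔
      insLE le₂ le₂' (as₂ i₀) (Sum.map as₂ bs₂ x) (Sum.map as₂ bs₂ y) := by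
  rcases x with x | x <;> rcases y with y | y
  exacts [hle x y, hle x i₀, and_congr (hle i₀ y) (not_congr (heq i₀ y)), hle' x y]

theorem insMT_sumMap_iff {mt₁ : W₁ → W₁ → Prop} {mt₂ : W₂ → W₂ → Prop}
    {mt₁' : X₁ → X₁ → Prop} {mt₂' : X₂ → X₂ → Prop}
    (hmt : ∀ i j, mt₁ (as₁ i) (as₁ j) ↔ mt₂ (as₂ i) (as₂ j))
    (hmt' : ∀ i j, mt₁' (bs₁ i) (bs₁ j) ↔ mt₂' (bs₂ i) (bs₂ j)) (x y : Fin ku ⊕ Fin kv) :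
    insMT mt₁ mt₁' (Sum.map as₁ bs₁ x) (Sum.map as₁ bs₁ y) ↔
      insMT mt₂ mt₂' (Sum.map as₂ bs₂ x) (Sum.map as₂ bs₂ y) := by
  rcases x with x | x <;> rcases y with y | y
  exacts [hmt x y, Iff.rfl, Iff.rfl, hmt' x y]

end

namespace FirstOrder.Language.AtomicEquiv

variable {Alpha W₁ W₂ : Type} {w₁ : NestedWordOn Alpha W₁} {w₂ : NestedWordOn Alpha W₂} {k : ℕ}
  {cs₁ : Fin k → W₁} {cs₂ : Fin k → W₂}

theorem nestedWord_label_eq_iff (h : AtomicEquiv (nwStructure w₁) (nwStructure w₂) cs₁ cs₂)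
    (i : Fin k) (a : Alpha) :
    w₁.label (cs₁ i) = a ↔ w₂.label (cs₂ i) = a :=
  h.2 (n := 1) a ![i]

theorem nestedWord_le_iff (h : AtomicEquiv (nwStructure w₁) (nwStructure w₂) cs₁ cs₂)
    (i j : Fin k) : w₁.le (cs₁ i) (cs₁ j) ↔ w₂.le (cs₂ i) (cs₂ j) :=
  h.2 (n := 2) .le ![i, j]

theorem nestedWord_mt_iff (h : AtomicEquiv (nwStructure w₁) (nwStructure w₂) cs₁ cs₂)
    (i j : Fin k) : w₁.mt (cs₁ i) (cs₁ j) ↔ w₂.mt (cs₂ i) (cs₂ j) :=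
  h.2 (n := 2) .mt ![i, j]

end FirstOrder.Language.AtomicEquiv

section Insert

instance isRelational_nwLang (Alpha : Type) : (nwLang Alpha).IsRelational :=
  fun _ => inferInstanceAs (IsEmpty Empty)

variable {Alpha U₁ U₂ V₁ V₂ : Type} {u₁ : NestedWordOn Alpha U₁} {u₂ : NestedWordOn Alpha U₂}
  {v₁ : NestedWordOn Alpha V₁} {v₂ : NestedWordOn Alpha V₂} {e₁ : U₁} {e₂ : U₂}

theorem atomicEquiv_insert {ku kv k : ℕ} {as₁ : Fin ku → U₁} {as₂ : Fin ku → U₂}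
    {bs₁ : Fin kv → V₁} {bs₂ : Fin kv → V₂} {i₀ : Fin ku} (h₁ : as₁ i₀ = e₁) (h₂ : as₂ i₀ = e₂)
    (hu : AtomicEquiv (nwStructure u₁) (nwStructure u₂) as₁ as₂)
    (hv : AtomicEquiv (nwStructure v₁) (nwStructure v₂) bs₁ bs₂) (σ : Fin k → Fin ku ⊕ Fin kv) :
    AtomicEquiv (insStructure u₁ v₁ e₁) (insStructure u₂ v₂ e₂)
      (Sum.map as₁ bs₁ ∘ σ) (Sum.map as₂ bs₂ ∘ σ) := by
  subst h₁ h₂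
  refine ⟨fun i j => sumMap_eq_sumMap_iff hu.1 hv.1 (σ i) (σ j), fun {n} R w => ?_⟩
  match n, R with
  | 0, R | n + 3, R => exact R.elim
  | 1, (a : Alpha) =>
    change Sum.elim u₁.label v₁.label (Sum.map as₁ bs₁ (σ (w 0))) = a ↔
      Sum.elim u₂.label v₂.label (Sum.map as₂ bs₂ (σ (w 0))) = a
    rcases σ (w 0) with x | x
    exacts [hu.nestedWord_label_eq_iff x a, hv.nestedWord_label_eq_iff x a]
  | 2, .le => exact insLE_sumMap_iff i₀ hu.1 hu.nestedWord_le_iff hv.nestedWord_le_iff _ _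
  | 2, .mt => exact insMT_sumMap_iff hu.nestedWord_mt_iff hv.nestedWord_mt_iff _ _

theorem duplicatorWins_insert (m : ℕ) {ku kv k : ℕ} {as₁ : Fin ku → U₁} {as₂ : Fin ku → U₂}
    {bs₁ : Fin kv → V₁} {bs₂ : Fin kv → V₂} {i₀ : Fin ku} (h₁ : as₁ i₀ = e₁) (h₂ : as₂ i₀ = e₂)
    (hu : DuplicatorWins (nwStructure u₁) (nwStructure u₂) m as₁ as₂)
    (hv : DuplicatorWins (nwStructure v₁) (nwStructure v₂) m bs₁ bs₂)
    (σ : Fin k → Fin ku ⊕ Fin kv) :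
    DuplicatorWins (insStructure u₁ v₁ e₁) (insStructure u₂ v₂ e₂) m
      (Sum.map as₁ bs₁ ∘ σ) (Sum.map as₂ bs₂ ∘ σ) := by
  induction m generalizing ku kv k with
  | zero => exact atomicEquiv_insert h₁ h₂ hu hv σ
  | succ m ih =>
    have play_u : ∀ a b, DuplicatorWins (nwStructure u₁) (nwStructure u₂) m
        (Fin.snoc as₁ a) (Fin.snoc as₂ b) →
        DuplicatorWins (insStructure u₁ v₁ e₁) (insStructure u₂ v₂ e₂) m
          (Fin.snoc (Sum.map as₁ bs₁ ∘ σ) (.inl a)) (Fin.snoc (Sum.map as₂ bs₂ ∘ σ) (.inl b)) := by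
      intro a b hab
      have := ih (i₀ := i₀.castSucc) (by simpa using h₁) (by simpa using h₂) hab hv.of_succ
        (Fin.snoc (Sum.map Fin.castSucc id ∘ σ) (.inl (Fin.last ku)))
      rwa [Fin.sumMap_snoc_comp_snoc_inl, Fin.sumMap_snoc_comp_snoc_inl] at this
    have play_v : ∀ a b, DuplicatorWins (nwStructure v₁) (nwStructure v₂) m
        (Fin.snoc bs₁ a) (Fin.snoc bs₂ b) →
        DuplicatorWins (insStructure u₁ v₁ e₁) (insStructure u₂ v₂ e₂) m
          (Fin.snoc (Sum.map as₁ bs₁ ∘ σ) (.inr a)) (Fin.snoc (Sum.map as₂ bs₂ ∘ σ) (.inr b)) := by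
      intro a b hab
      have := ih h₁ h₂ hu.of_succ hab (Fin.snoc (Sum.map id Fin.castSucc ∘ σ) (.inr (Fin.last kv)))
      rwa [Fin.sumMap_snoc_comp_snoc_inr, Fin.sumMap_snoc_comp_snoc_inr] at this
    refine ⟨atomicEquiv_insert h₁ h₂ hu.atomicEquiv hv.atomicEquiv σ, ?_, ?_⟩
    · rintro (a | a)
      · obtain ⟨b, hb⟩ := hu.2.1 a
        exact ⟨.inl b, play_u a b hb⟩
      · obtain ⟨b, hb⟩ := hv.2.1 a
        exact ⟨.inr b, play_v a b hb⟩
    · rintro (b | b)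
      · obtain ⟨a, ha⟩ := hu.2.2 b
        exact ⟨.inl a, play_u a b ha⟩
      · obtain ⟨a, ha⟩ := hv.2.2 b
        exact ⟨.inr a, play_v a b ha⟩

end Insert

namespace FirstOrder.Language.QREquiv

variable {L : Language} {m : ℕ} {M N : Type} {SM : L.Structure M} {SN : L.Structure N}

theorem of_eqQR (h : eqQR L m M N SM SN) :
    QREquiv SM SN m (default : Fin 0 → M) default :=
  h

theorem of_eqQR1 {a : M} {b : N} (h : eqQR1 L m M N SM SN a b) :
    QREquiv SM SN m (fun _ : Fin 1 => a) (fun _ => b) := by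
  intro φ hφ
  have hrealize : ∀ {W : Type} [L.Structure W] (c : W),
      (φ.toFormula.relabel (Sum.elim Empty.elim id)).Realize (fun _ => c) ↔
        φ.Realize default fun _ => c := by
    intro W _ c
    rw [Formula.realize_relabel, BoundedFormula.realize_toFormula,
      Subsingleton.elim (_ ∘ _) default]
    rfl
  rw [← @hrealize M SM, ← @hrealize N SN]
  refine h _ ?_
  rwa [Formula.relabel, BoundedFormula.qr_relabel, BoundedFormula.qr_toFormula]

theorem eqQR (h : QREquiv SM SN m (default : Fin 0 → M) default) : eqQR L m M N SM SN :=
  h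

end FirstOrder.Language.QREquiv

theorem insert_preserves_qr_equivalence_general (Alpha : Type) (m : ℕ)
    (U₁ U₂ V₁ V₂ : Type) [Fintype U₁] [Fintype U₂] [Fintype V₁] [Fintype V₂]
    (u₁ : NestedWordOn Alpha U₁) (u₂ : NestedWordOn Alpha U₂)
    (v₁ : NestedWordOn Alpha V₁) (v₂ : NestedWordOn Alpha V₂)
    (e₁ : U₁) (e₂ : U₂)
    (hu : eqQR1 (nwLang Alpha) m U₁ U₂ (nwStructure u₁) (nwStructure u₂) e₁ e₂)
    (hv : eqQR (nwLang Alpha) m V₁ V₂ (nwStructure v₁) (nwStructure v₂)) :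
    eqQR (nwLang Alpha) m (U₁ ⊕ V₁) (U₂ ⊕ V₂)
      (insStructure u₁ v₁ e₁) (insStructure u₂ v₂ e₂) := by
  have hins := duplicatorWins_insert m (i₀ := 0) rfl rfl
    (QREquiv.of_eqQR1 hu).duplicatorWins (QREquiv.of_eqQR hv).duplicatorWins Fin.elim0
  rw [Subsingleton.elim (_ ∘ Fin.elim0) default, Subsingleton.elim (_ ∘ Fin.elim0) default] at hins
  exact hins.qrEquiv.eqQR

/-- Composition lemma for inserts of nested words:
`(u₁, e₁) ≡_m (u₂, e₂)` and `v₁ ≡_m v₂` imply `u₁↑_{e₁}v₁ ≡_m u₂↑_{e₂}v₂`. -/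
theorem insert_preserves_qr_equivalence (Alpha : Type) [Fintype Alpha] (m : ℕ)
    (U₁ U₂ V₁ V₂ : Type) [Fintype U₁] [Fintype U₂] [Fintype V₁] [Fintype V₂]
    (u₁ : NestedWordOn Alpha U₁) (u₂ : NestedWordOn Alpha U₂)
    (v₁ : NestedWordOn Alpha V₁) (v₂ : NestedWordOn Alpha V₂)
    (e₁ : U₁) (e₂ : U₂)
    (hu : eqQR1 (nwLang Alpha) m U₁ U₂ (nwStructure u₁) (nwStructure u₂) e₁ e₂)
    (hv : eqQR (nwLang Alpha) m V₁ V₂ (nwStructure v₁) (nwStructure v₂)) :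
    eqQR (nwLang Alpha) m (U₁ ⊕ V₁) (U₂ ⊕ V₂)
      (insStructure u₁ v₁ e₁) (insStructure u₂ v₂ e₂) :=
  insert_preserves_qr_equivalence_general Alpha m U₁ U₂ V₁ V₂ u₁ u₂ v₁ v₂ e₁ e₂ hu hv
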